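/- Let a, b, c be complex numbers with positive real parts, let γ be any complex number, x a real number, and t a complex number with |t| < 1/2. Then ∑_{n=0}^{∞} [₃F₂(−n, a+ix, a−ix; a+b, a+c; 1)/n!] · (γ)_n · tⁿ = (1−t)^{−γ} · ∑_{k=0}^{∞} [(γ)_k (a+ix)_k (a−ix)_k / ((a+b)_k (a+c)_k k!)] · (t/(t−1))^k, where both series converge absolutely (note |t/(t−1)| < 1 when |t| < 1/2) and (1−t)^{−γ} is the principal branch. -/

import Mathlib

/-!
Since `(−n)_k / n! = (−1)^k / (n−k)!`, the left side is a double series in `k` and `m = n − k`.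
For fixed `k` the sum over `m` is the binomial series `∑ₘ (γ+k)_m tᵐ / m! = (1−t)^(−γ−k)`, which
produces the `k`-th term of the right side. The rearrangement is justified by absolute
convergence: replacing `γ` and `t` by `‖γ‖` and `‖t‖` bounds the double series by
`(1−‖t‖)^(−‖γ‖)` times a `₃F₂` series at `‖t‖/(1−‖t‖)`, which is `< 1` exactly when `‖t‖ < 1/2`,
so the ratio test applies.
-/

/-- The Pochhammer symbol (rising factorial): `(w)_k = w (w+1) ⋯ (w+k−1)`. -/
noncomputable def poch (w : ℂ) (k : ℕ) : ℂ := ∏ i ∈ Finset.range k, (w + i)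

/-- The terminating hypergeometric sum
`₃F₂(−n, p, q; r, s; 1) = ∑_{k=0}^n ((−n)_k (p)_k (q)_k)/((r)_k (s)_k k!)`. -/
noncomputable def F32 (n : ℕ) (p q r s : ℂ) : ℂ :=
  ∑ k ∈ Finset.range (n + 1),
    poch (-(n : ℂ)) k * poch p k * poch q k / (poch r k * poch s k * (k.factorial : ℂ))

open Finset Filter Topology

lemma poch_succ (w : ℂ) (k : ℕ) : poch w (k + 1) = poch w k * (w + k) := prod_range_succ _ _

lemma poch_add (w : ℂ) (k m : ℕ) : poch w (k + m) = poch w k * poch (w + k) m := by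
  simp only [poch, prod_range_add, Nat.cast_add, add_assoc]

lemma poch_eq_eval_ascPochhammer (w : ℂ) (k : ℕ) : poch w k = (ascPochhammer ℂ k).eval w := by
  induction k with
  | zero => simp [poch]
  | succ k ih => rw [poch_succ, ih, ascPochhammer_succ_eval]

lemma poch_neg_natCast {n k : ℕ} (hk : k ≤ n) :
    poch (-n) k = (-1) ^ k * n.factorial / (n - k).factorial := by
  have h : ((n - k).factorial : ℂ) ≠ 0 := Nat.cast_ne_zero.mpr (Nat.factorial_ne_zero _)
  rw [poch_eq_eval_ascPochhammer, ascPochhammer_eval_neg_eq_descPochhammer,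
    descPochhammer_eval_eq_descFactorial, eq_div_iff h, mul_assoc, ← Nat.cast_mul, mul_comm (n.descFactorial k), Nat.factorial_mul_descFactorial hk]

lemma norm_poch_le (w : ℂ) (k : ℕ) : ‖poch w k‖ ≤ ‖poch ‖w‖ k‖ := by
  simp only [poch, norm_prod]
  gcongr with i
  calc ‖w + i‖ ≤ ‖w‖ + i := by simpa using norm_add_le w i
    _ = ‖(‖w‖ : ℂ) + i‖ := by norm_cast; rw [Real.norm_of_nonneg (by positivity)]

lemma poch_ofReal_eq_norm {A : ℝ} (hA : 0 ≤ A) (k : ℕ) : poch A k = ‖poch A k‖ := by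
  have h : poch A k = ((∏ i ∈ range k, (A + i) : ℝ) : ℂ) := by simp [poch]
  rw [h, Complex.norm_real, Real.norm_of_nonneg (by positivity)]

lemma Ring.choose_add_natCast_sub_one (w : ℂ) (n : ℕ) :
    Ring.choose (w + n - 1) n = poch w n / n.factorial := by
  rw [Ring.choose_eq_smul, Polynomial.descPochhammer_smeval_eq_ascPochhammer,
    Polynomial.ascPochhammer_smeval_eq_eval,
    poch_eq_eval_ascPochhammer, smul_eq_mul, div_eq_inv_mul]
  congr 3
  ring

lemma hasSum_poch_mul_pow_div_factorial (w : ℂ) {t : ℂ} (ht : ‖t‖ < 1) :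
    HasSum (fun m => poch w m * t ^ m / m.factorial) ((1 - t) ^ (-w)) := by
  have h := (Complex.one_div_one_sub_cpow_hasFPowerSeriesOnBall_zero w).hasSum
    (y := t) (by simpa [← ofReal_norm, ENNReal.ofReal_lt_one] using ht)
  simp only [FormalMultilinearSeries.ofScalars_apply_eq, Ring.choose_add_natCast_sub_one,
    zero_add, smul_eq_mul, one_div, ← Complex.cpow_neg] at h
  simpa only [div_mul_eq_mul_div] using h

lemma hasSum_norm_poch_mul_pow_div_factorial {A x : ℝ} (hA : 0 ≤ A) (hx : 0 ≤ x)
    (hx1 : x < 1) :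
    HasSum (fun m => ‖poch A m‖ * x ^ m / m.factorial) ((1 - x) ^ (-A)) := by
  rw [← Complex.hasSum_ofReal, Complex.ofReal_cpow (by linarith)]
  push_cast
  simp only [← poch_ofReal_eq_norm hA]
  exact hasSum_poch_mul_pow_div_factorial A (by simpa [abs_of_nonneg hx] using hx1)

lemma summable_norm_of_succ_eq_mul {R : Type*} [SeminormedRing R] {f g : ℕ → R} {l : ℝ}
    (hfg : ∀ n, f (n + 1) = f n * g n) (hg : Tendsto (fun n => ‖g n‖) atTop (𝓝 l)) (hl : l < 1) :
    Summable (fun n => ‖f n‖) := by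
  obtain ⟨r, hlr, hr1⟩ := exists_between hl
  refine summable_of_ratio_norm_eventually_le hr1 ?_
  filter_upwards [hg.eventually (gt_mem_nhds hlr)] with n hn
  rw [norm_norm, norm_norm, hfg, mul_comm r]
  exact (norm_mul_le _ _).trans (by gcongr)

noncomputable def F32Term (a₁ a₂ a₃ b₁ b₂ w : ℂ) (k : ℕ) : ℂ :=
  poch a₁ k * poch a₂ k * poch a₃ k / (poch b₁ k * poch b₂ k * (k.factorial : ℂ)) * w ^ k

lemma F32Term_succ (a₁ a₂ a₃ b₁ b₂ w : ℂ) (k : ℕ) :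
    F32Term a₁ a₂ a₃ b₁ b₂ w (k + 1) = F32Term a₁ a₂ a₃ b₁ b₂ w k *
      ((a₁ + k) / (b₁ + k) * ((a₂ + k) / (b₂ + k)) * ((a₃ + k) / (1 + k)) * w) := by
  simp only [F32Term, poch_succ, Nat.factorial_succ, Nat.cast_mul, Nat.cast_succ, div_eq_mul_inv,
    mul_inv]
  ring

lemma F32Term_mul_pow (a₁ a₂ a₃ b₁ b₂ w u : ℂ) (k : ℕ) :
    F32Term a₁ a₂ a₃ b₁ b₂ (w * u) k = F32Term a₁ a₂ a₃ b₁ b₂ w k * u ^ k := by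
  simp only [F32Term, mul_pow, mul_assoc]

lemma tendsto_add_div_add_atTop (a b : ℂ) :
    Tendsto (fun k : ℕ => (a + k) / (b + k)) atTop (𝓝 1) := by
  simpa using tendsto_add_mul_div_add_mul_atTop_nhds a b 1 one_ne_zero

lemma summable_norm_F32Term (a₁ a₂ a₃ b₁ b₂ : ℂ) {w : ℂ} (hw : ‖w‖ < 1) :
    Summable (fun k => ‖F32Term a₁ a₂ a₃ b₁ b₂ w k‖) := by
  refine summable_norm_of_succ_eq_mul (F32Term_succ a₁ a₂ a₃ b₁ b₂ w) ?_ hw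
  simpa using (((tendsto_add_div_add_atTop a₁ b₁).mul (tendsto_add_div_add_atTop a₂ b₂)).mul
    (tendsto_add_div_add_atTop a₃ 1)).mul_const w |>.norm

lemma norm_div_sub_one_lt_one {t : ℂ} (ht : ‖t‖ < 1 / 2) : ‖t / (t - 1)‖ < 1 := by
  have h : 1 - ‖t‖ ≤ ‖t - 1‖ := by simpa [norm_sub_rev] using norm_sub_norm_le (1 : ℂ) t
  rw [norm_div, div_lt_one (by linarith)]
  linarith

theorem HasSum.sum_antidiagonal {A α : Type*} [AddMonoid A] [HasAntidiagonal A] [AddCommMonoid α]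
    [TopologicalSpace α] [ContinuousAdd α] [RegularSpace α] {f : A × A → α} {a : α}
    (hf : HasSum f a) : HasSum (fun n => ∑ kl ∈ antidiagonal n, f kl) a :=
  (HasAntidiagonal.sigmaAntidiagonalEquivProd.hasSum_iff.mpr hf).sigma
    fun n => (antidiagonal n).hasSum f

section DoubleSeries

variable (p q r s γ t : ℂ)

noncomputable def F32DoubleTerm (km : ℕ × ℕ) : ℂ :=
  (-1) ^ km.1 * poch p km.1 * poch q km.1 / (poch r km.1 * poch s km.1 * km.1.factorial) *
    poch γ (km.1 + km.2) * t ^ (km.1 + km.2) / km.2.factorial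

lemma sum_antidiagonal_F32DoubleTerm (n : ℕ) :
    ∑ km ∈ antidiagonal n, F32DoubleTerm p q r s γ t km =
      F32 n p q r s / n.factorial * poch γ n * t ^ n := by
  rw [Nat.sum_antidiagonal_eq_sum_range_succ_mk, F32, sum_div, sum_mul, sum_mul]
  refine sum_congr rfl fun k hk => ?_
  have hkn : k ≤ n := Nat.lt_succ_iff.mp (mem_range.mp hk)
  have hn : (n.factorial : ℂ) ≠ 0 := Nat.cast_ne_zero.mpr n.factorial_ne_zero
  rw [F32DoubleTerm, Nat.add_sub_cancel' hkn, poch_neg_natCast hkn]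
  field_simp

lemma hasSum_F32DoubleTerm_fiber (ht : ‖t‖ < 1) (k : ℕ) :
    HasSum (fun m => F32DoubleTerm p q r s γ t (k, m))
      ((1 - t) ^ (-γ) * F32Term γ p q r s (t / (t - 1)) k) := by
  have h1t : (1 : ℂ) - t ≠ 0 := by
    rw [sub_ne_zero]; rintro rfl; simp at ht
  have hz : t / (t - 1) = -t * (1 - t)⁻¹ := by
    rw [← neg_sub 1 t, div_neg, div_eq_mul_inv, neg_mul]
  have hcpow : (1 - t) ^ (-(γ + k)) = (1 - t) ^ (-γ) * ((1 - t) ^ k)⁻¹ := by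
    rw [neg_add, Complex.cpow_add _ _ h1t, Complex.cpow_neg _ (k : ℂ), Complex.cpow_natCast]
  set c := (-1) ^ k * poch p k * poch q k / (poch r k * poch s k * k.factorial) * poch γ k * t ^ k
  have hterm : (fun m => F32DoubleTerm p q r s γ t (k, m)) =
      fun m => c * (poch (γ + k) m * t ^ m / m.factorial) := by
    funext m
    simp only [F32DoubleTerm, c, poch_add, pow_add]
    ring
  have hsum : (1 - t) ^ (-γ) * F32Term γ p q r s (t / (t - 1)) k = c * (1 - t) ^ (-(γ + k)) := by
    rw [hcpow, hz, F32Term_mul_pow, F32Term, neg_pow, inv_pow]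
    ring
  rw [hterm, hsum]
  exact (hasSum_poch_mul_pow_div_factorial (γ + k) ht).mul_left c

lemma norm_F32DoubleTerm_le (k m : ℕ) :
    ‖F32DoubleTerm p q r s γ t (k, m)‖ ≤
      ‖F32Term ‖γ‖ p q r s ‖t‖ k‖ * (‖poch (‖γ‖ + k : ℝ) m‖ * ‖t‖ ^ m / m.factorial) := by
  have hγ : ‖poch γ (k + m)‖ ≤ ‖poch ‖γ‖ k‖ * ‖poch (‖γ‖ + k : ℝ) m‖ := by
    simpa [poch_add] using norm_poch_le γ (k + m)
  simp only [F32DoubleTerm, F32Term, norm_mul, norm_div, norm_pow, norm_neg, norm_one, one_pow,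
    Complex.norm_natCast, Complex.norm_real, norm_norm, pow_add]
  calc _ = ‖poch p k‖ * ‖poch q k‖ / (‖poch r k‖ * ‖poch s k‖ * k.factorial) * ‖t‖ ^ k *
        ‖poch γ (k + m)‖ * ‖t‖ ^ m / m.factorial := by ring
    _ ≤ ‖poch p k‖ * ‖poch q k‖ / (‖poch r k‖ * ‖poch s k‖ * k.factorial) * ‖t‖ ^ k *
        (‖poch ‖γ‖ k‖ * ‖poch (‖γ‖ + k : ℝ) m‖) * ‖t‖ ^ m / m.factorial := by gcongr
    _ = _ := by ring

lemma summable_norm_F32DoubleTerm (ht : ‖t‖ < 1 / 2) :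
    Summable (fun km => ‖F32DoubleTerm p q r s γ t km‖) := by
  set x := ‖t‖
  have hx0 : 0 ≤ x := norm_nonneg t
  have hx1 : 0 < 1 - x := by linarith
  have hcol : ∀ k : ℕ, HasSum
      (fun m => ‖F32Term ‖γ‖ p q r s x k‖ * (‖poch (‖γ‖ + k : ℝ) m‖ * x ^ m / m.factorial))
      ((1 - x) ^ (-‖γ‖) * ‖F32Term ‖γ‖ p q r s (x * (1 - x : ℂ)⁻¹) k‖) := by
    intro k
    have hsum : (1 - x) ^ (-‖γ‖) * ‖F32Term ‖γ‖ p q r s (x * (1 - x : ℂ)⁻¹) k‖ =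
        ‖F32Term ‖γ‖ p q r s x k‖ * (1 - x) ^ (-(‖γ‖ + k)) := by
      rw [F32Term_mul_pow, norm_mul, norm_pow, norm_inv, neg_add, Real.rpow_add hx1,
        Real.rpow_neg hx1.le (k : ℝ), Real.rpow_natCast]
      norm_cast
      rw [Real.norm_of_nonneg hx1.le]
      ring
    rw [hsum]
    exact (hasSum_norm_poch_mul_pow_div_factorial (add_nonneg (norm_nonneg γ) k.cast_nonneg) hx0
      (by linarith)).mul_left _
  have hM : Summable (fun km : ℕ × ℕ => ‖F32Term ‖γ‖ p q r s x km.1‖ *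
      (‖poch (‖γ‖ + km.1 : ℝ) km.2‖ * x ^ km.2 / km.2.factorial)) := by
    refine (summable_prod_of_nonneg fun _ => by positivity).mpr
      ⟨fun k => (hcol k).summable, ?_⟩
    refine ((summable_norm_F32Term _ p q r s ?_).mul_left ((1 - x) ^ (-‖γ‖))).congr
      fun k => (hcol k).tsum_eq.symm
    rw [norm_mul, norm_inv]
    norm_cast
    rw [Real.norm_of_nonneg hx0, Real.norm_of_nonneg hx1.le, ← div_eq_mul_inv, div_lt_one hx1]
    linarith
  exact hM.of_nonneg_of_le (fun _ => norm_nonneg _)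
    fun km => norm_F32DoubleTerm_le p q r s γ t km.1 km.2

end DoubleSeries

theorem hasSum_F32_generatingFunction (p q r s γ : ℂ) {t : ℂ} (ht : ‖t‖ < 1 / 2) :
    HasSum (fun n : ℕ => F32 n p q r s / n.factorial * poch γ n * t ^ n)
      ((1 - t) ^ (-γ) * ∑' k, F32Term γ p q r s (t / (t - 1)) k) := by
  have hf := (summable_norm_F32DoubleTerm p q r s γ t ht).of_norm.hasSum
  have hcols := hf.prod_fiberwise (hasSum_F32DoubleTerm_fiber p q r s γ t (by linarith))
  rw [← tsum_mul_left, hcols.tsum_eq]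
  simpa only [sum_antidiagonal_F32DoubleTerm] using hf.sum_antidiagonal

theorem stmt10_general (a b c : ℂ)
    (γ : ℂ) (x : ℝ) (t : ℂ) (ht : ‖t‖ < 1/2) :
    Summable (fun n : ℕ =>
      F32 n (a + Complex.I * x) (a - Complex.I * x) (a + b) (a + c) / (n.factorial : ℂ) *
        poch γ n * t ^ n) ∧
    Summable (fun k : ℕ =>
      poch γ k * poch (a + Complex.I * x) k * poch (a - Complex.I * x) k /
        (poch (a + b) k * poch (a + c) k * (k.factorial : ℂ)) * (t / (t - 1)) ^ k) ∧
    (∑' n : ℕ,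
      F32 n (a + Complex.I * x) (a - Complex.I * x) (a + b) (a + c) / (n.factorial : ℂ) *
        poch γ n * t ^ n)
      = (1 - t) ^ (-γ) *
        ∑' k : ℕ,
          poch γ k * poch (a + Complex.I * x) k * poch (a - Complex.I * x) k /
            (poch (a + b) k * poch (a + c) k * (k.factorial : ℂ)) * (t / (t - 1)) ^ k := by
  have h := hasSum_F32_generatingFunction (a + Complex.I * x) (a - Complex.I * x) (a + b) (a + c)
    γ ht
  exact ⟨h.summable, (summable_norm_F32Term _ _ _ _ _ (norm_div_sub_one_lt_one ht)).of_norm,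
    h.tsum_eq⟩

/-- For `a, b, c` with positive real parts, any complex `γ`, real `x` and complex `t` with
`|t| < 1/2`:
`∑_{n≥0} [₃F₂(−n, a+ix, a−ix; a+b, a+c; 1)/n!] (γ)_n tⁿ
  = (1−t)^{−γ} ∑_{k≥0} [(γ)_k (a+ix)_k (a−ix)_k / ((a+b)_k (a+c)_k k!)] (t/(t−1))^k`,
both series converging absolutely. -/
theorem stmt10 (a b c : ℂ) (ha : 0 < a.re) (hb : 0 < b.re) (hc : 0 < c.re)
    (γ : ℂ) (x : ℝ) (t : ℂ) (ht : ‖t‖ < 1/2) :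
    Summable (fun n : ℕ =>
      F32 n (a + Complex.I * x) (a - Complex.I * x) (a + b) (a + c) / (n.factorial : ℂ) *
        poch γ n * t ^ n) ∧
    Summable (fun k : ℕ =>
      poch γ k * poch (a + Complex.I * x) k * poch (a - Complex.I * x) k /
        (poch (a + b) k * poch (a + c) k * (k.factorial : ℂ)) * (t / (t - 1)) ^ k) ∧
    (∑' n : ℕ,
      F32 n (a + Complex.I * x) (a - Complex.I * x) (a + b) (a + c) / (n.factorial : ℂ) *
        poch γ n * t ^ n)
      = (1 - t) ^ (-γ) *
        ∑' k : ℕ,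
          poch γ k * poch (a + Complex.I * x) k * poch (a - Complex.I * x) k /
            (poch (a + b) k * poch (a + c) k * (k.factorial : ℂ)) * (t / (t - 1)) ^ k :=
  stmt10_general a b c γ x t ht
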